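/- arXiv:2602.10027 — 5 statements merged into one kernel-verified Lean document; each statement's English description precedes it below -/
import Mathlib

section
/- Let O, E, B be nonempty axis-aligned bounding boxes in Euclidean space ℝ^r. Then the following are equivalent: (i) for every corner o' of O, MaxDist(o', E) < MinDist(o', B); (ii) for every point o ∈ O, every point e ∈ E, and every point b ∈ B, dist(o, e) < dist(o, b). (All-Points Proximity Theorem.) -/
/-- Axis-aligned bounding box in `ℝ^r` with componentwise bounds `ℓ ≤ u`. -/
def AABB {r : ℕ} (ℓ u : EuclideanSpace ℝ (Fin r)) : Set (EuclideanSpace ℝ (Fin r)) :=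
  {x | ∀ d, ℓ d ≤ x d ∧ x d ≤ u d}

/-- `c` is a corner of the AABB with bounds `ℓ`, `u`. -/
def IsBoxCorner {r : ℕ} (ℓ u c : EuclideanSpace ℝ (Fin r)) : Prop :=
  ∀ d, c d = ℓ d ∨ c d = u d

/-- Minimum distance from a point to a set. -/
noncomputable def MinDist {r : ℕ} (p : EuclideanSpace ℝ (Fin r))
    (M : Set (EuclideanSpace ℝ (Fin r))) : ℝ :=
  sInf ((dist p) '' M)

/-- Maximum distance from a point to a set. -/
noncomputable def MaxDist {r : ℕ} (p : EuclideanSpace ℝ (Fin r))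
    (M : Set (EuclideanSpace ℝ (Fin r))) : ℝ :=
  sSup ((dist p) '' M)

lemma dist_eq_sqrt {r : ℕ} (x y : EuclideanSpace ℝ (Fin r)) :
    dist x y = Real.sqrt (∑ d, (x d - y d) ^ 2) := by
  rw [EuclideanSpace.dist_eq]
  congr 1
  apply Finset.sum_congr rfl
  intro d _
  rw [Real.dist_eq, sq_abs]

lemma aabb_nonempty {r : ℕ} (ℓ u : EuclideanSpace ℝ (Fin r)) (h : ∀ d, ℓ d ≤ u d) :
    (AABB ℓ u).Nonempty := ⟨ℓ, fun d => ⟨le_refl _, h d⟩⟩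

lemma aabb_compact {r : ℕ} (ℓ u : EuclideanSpace ℝ (Fin r)) :
    IsCompact (AABB ℓ u) := by
  apply Metric.isCompact_of_isClosed_isBounded
  · have : AABB ℓ u = ⋂ d, ((fun x : EuclideanSpace ℝ (Fin r) => x d) ⁻¹' Set.Icc (ℓ d) (u d)) := by
      ext x
      simp [AABB, Set.mem_iInter, Set.mem_Icc]
    rw [this]
    exact isClosed_iInter fun d =>
      isClosed_Icc.preimage (EuclideanSpace.proj (𝕜 := ℝ) d).continuous
  · apply (Metric.isBounded_closedBall (x := ℓ) (r := dist ℓ u)).subset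
    intro q hq
    rw [Metric.mem_closedBall, dist_comm, dist_eq_sqrt, dist_eq_sqrt]
    apply Real.sqrt_le_sqrt
    apply Finset.sum_le_sum
    intro d _
    have h1 := (hq d).1
    have h2 := (hq d).2
    nlinarith

lemma corner_mem {r : ℕ} (ℓ u c : EuclideanSpace ℝ (Fin r)) (h : ∀ d, ℓ d ≤ u d)
    (hc : IsBoxCorner ℓ u c) : c ∈ AABB ℓ u := by
  intro d
  rcases hc d with h' | h' <;> rw [h'] <;> exact ⟨by simp [h d], by simp [h d]⟩

/-- All-Points Proximity Theorem. -/
theorem all_points_proximity {r : ℕ} (ℓO uO ℓE uE ℓB uB : EuclideanSpace ℝ (Fin r))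
    (hO : ∀ d, ℓO d ≤ uO d) (hE : ∀ d, ℓE d ≤ uE d) (hB : ∀ d, ℓB d ≤ uB d) :
    (∀ o', IsBoxCorner ℓO uO o' → MaxDist o' (AABB ℓE uE) < MinDist o' (AABB ℓB uB)) ↔
      (∀ o ∈ AABB ℓO uO, ∀ e ∈ AABB ℓE uE, ∀ b ∈ AABB ℓB uB, dist o e < dist o b) := by
  have hEc := aabb_compact ℓE uE
  have hBc := aabb_compact ℓB uB
  have hEn := aabb_nonempty ℓE uE hE
  have hBn := aabb_nonempty ℓB uB hB
  constructor
  · -- corners ⇒ all points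
    intro h o ho e he b hb
    -- the corner adapted to e, b
    set c : EuclideanSpace ℝ (Fin r) := WithLp.toLp 2 (fun d => if e d ≤ b d then uO d else ℓO d) with hc
    have hcorner : IsBoxCorner ℓO uO c := by
      intro d
      by_cases hd : e d ≤ b d
      · right; simp [hc, hd]
      · left; simp [hc, hd]
    have hcO : c ∈ AABB ℓO uO := corner_mem _ _ _ hO hcorner
    have hmax : dist c e ≤ MaxDist c (AABB ℓE uE) := by
      apply le_csSup
      · exact (hEc.image (Continuous.dist continuous_const continuous_id)).bddAbove
      · exact ⟨e, he, rfl⟩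
    have hmin : MinDist c (AABB ℓB uB) ≤ dist c b := by
      apply csInf_le
      · exact (hBc.image (Continuous.dist continuous_const continuous_id)).bddBelow
      · exact ⟨b, hb, rfl⟩
    have hcb : dist c e < dist c b := lt_of_le_of_lt hmax (lt_of_lt_of_le (h c hcorner) hmin)
    -- squares at the corner
    have hsq : ∑ d, (c d - e d) ^ 2 < ∑ d, (c d - b d) ^ 2 := by
      by_contra hcon
      push_neg at hcon
      have := Real.sqrt_le_sqrt hcon
      rw [← dist_eq_sqrt, ← dist_eq_sqrt] at this
      exact absurd hcb (not_lt.mpr this)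
    -- per-coordinate comparison
    have hsum : ∑ d, ((o d - e d) ^ 2 - (o d - b d) ^ 2)
        ≤ ∑ d, ((c d - e d) ^ 2 - (c d - b d) ^ 2) := by
      apply Finset.sum_le_sum
      intro d _
      have h1 := (ho d).1
      have h2 := (ho d).2
      by_cases hd : e d ≤ b d
      · have hcd : c d = uO d := by simp [hc, hd]
        rw [hcd]; nlinarith
      · have hcd : c d = ℓO d := by simp [hc, hd]
        push_neg at hd
        rw [hcd]; nlinarith
    rw [Finset.sum_sub_distrib, Finset.sum_sub_distrib] at hsum
    have hosq : ∑ d, (o d - e d) ^ 2 < ∑ d, (o d - b d) ^ 2 := by linarith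
    rw [dist_eq_sqrt, dist_eq_sqrt]
    apply Real.sqrt_lt_sqrt _ hosq
    positivity
  · -- all points ⇒ corners
    intro h c hcorner
    have hcO : c ∈ AABB ℓO uO := corner_mem _ _ _ hO hcorner
    have hEim : IsCompact ((dist c) '' AABB ℓE uE) :=
      hEc.image (Continuous.dist continuous_const continuous_id)
    have hBim : IsCompact ((dist c) '' AABB ℓB uB) :=
      hBc.image (Continuous.dist continuous_const continuous_id)
    obtain ⟨e, he, hde⟩ := hEim.sSup_mem (hEn.image _)
    obtain ⟨b, hb, hdb⟩ := hBim.sInf_mem (hBn.image _)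
    rw [MaxDist, MinDist, ← hde, ← hdb]
    exact h c hcO e he b hb
end

section
/- Let E and B be nonempty axis-aligned bounding boxes in Euclidean space ℝ^r. Then the function g : ℝ^r → ℝ defined by g(p) = MaxDist(p, E)² − MinDist(p, B)² is convex on ℝ^r. -/
lemma key_id {r : ℕ} (x y e c : EuclideanSpace ℝ (Fin r)) (a b : ℝ) (hab : a + b = 1) :
    dist (a • x + b • y) e ^ 2 - dist (a • x + b • y) c ^ 2
      = a * (dist x e ^ 2 - dist x c ^ 2) + b * (dist y e ^ 2 - dist y c ^ 2) := by
  have expand : ∀ p q : EuclideanSpace ℝ (Fin r),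
      dist p q ^ 2 = ‖p‖ ^ 2 - 2 * (inner ℝ p q : ℝ) + ‖q‖ ^ 2 := by
    intro p q; rw [dist_eq_norm]; exact norm_sub_sq_real p q
  rw [expand (a • x + b • y) e, expand (a • x + b • y) c, expand x e, expand x c,
    expand y e, expand y c, inner_add_left, inner_add_left,
    real_inner_smul_left, real_inner_smul_left, real_inner_smul_left, real_inner_smul_left]
  linear_combination (‖c‖ ^ 2 - ‖e‖ ^ 2) * hab

/-- The difference of the squared max-distance to `E` and the squared min-distance to `B`
is a convex function. -/
theorem g_convex {r : ℕ} (ℓE uE ℓB uB : EuclideanSpace ℝ (Fin r))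
    (hE : ∀ d, ℓE d ≤ uE d) (hB : ∀ d, ℓB d ≤ uB d) :
    ConvexOn ℝ Set.univ
      (fun p : EuclideanSpace ℝ (Fin r) =>
        MaxDist p (AABB ℓE uE) ^ 2 - MinDist p (AABB ℓB uB) ^ 2) := by
  set E := AABB ℓE uE with hEdef
  set B := AABB ℓB uB with hBdef
  have hEne : E.Nonempty := ⟨ℓE, fun d => ⟨le_refl _, hE d⟩⟩
  have hBne : B.Nonempty := ⟨ℓB, fun d => ⟨le_refl _, hB d⟩⟩
  have hEcomp : IsCompact E := aabb_compact ℓE uE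
  have hBcomp : IsCompact B := aabb_compact ℓB uB
  refine ⟨convex_univ, ?_⟩
  intro x _ y _ a b ha hb hab
  set z := a • x + b • y with hzdef
  obtain ⟨e, heE, hemax⟩ := hEcomp.exists_isMaxOn hEne
    ((continuous_const.dist continuous_id).continuousOn (s := E) (f := fun q => dist z q))
  obtain ⟨c, hcB, hcmin⟩ := hBcomp.exists_isMinOn hBne
    ((continuous_const.dist continuous_id).continuousOn (s := B) (f := fun q => dist z q))
  have hbddE : ∀ p : EuclideanSpace ℝ (Fin r), BddAbove (dist p '' E) :=
    fun p => ((hEcomp.image (continuous_const.dist continuous_id)).bddAbove)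
  have hbddB : ∀ p : EuclideanSpace ℝ (Fin r), BddBelow (dist p '' B) :=
    fun p => ⟨0, by rintro _ ⟨q, _, rfl⟩; exact dist_nonneg⟩
  have hMz : MaxDist z E = dist z e := by
    refine le_antisymm (csSup_le (hEne.image _) ?_) (le_csSup (hbddE z) ⟨e, heE, rfl⟩)
    rintro _ ⟨q, hq, rfl⟩; exact hemax hq
  have hmz : MinDist z B = dist z c := by
    refine le_antisymm (csInf_le (hbddB z) ⟨c, hcB, rfl⟩) (le_csInf (hBne.image _) ?_)
    rintro _ ⟨q, hq, rfl⟩; exact hcmin hq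
  have h1 : dist x e ≤ MaxDist x E := le_csSup (hbddE x) ⟨e, heE, rfl⟩
  have h2 : dist y e ≤ MaxDist y E := le_csSup (hbddE y) ⟨e, heE, rfl⟩
  have h3 : MinDist x B ≤ dist x c := csInf_le (hbddB x) ⟨c, hcB, rfl⟩
  have h4 : MinDist y B ≤ dist y c := csInf_le (hbddB y) ⟨c, hcB, rfl⟩
  have h5 : (0:ℝ) ≤ MinDist x B := le_csInf (hBne.image _) (by rintro _ ⟨q, _, rfl⟩; exact dist_nonneg)
  have h6 : (0:ℝ) ≤ MinDist y B := le_csInf (hBne.image _) (by rintro _ ⟨q, _, rfl⟩; exact dist_nonneg)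
  have key := key_id x y e c a b hab
  have sq1 : dist x e ^ 2 ≤ MaxDist x E ^ 2 := by nlinarith [dist_nonneg (x := x) (y := e)]
  have sq2 : dist y e ^ 2 ≤ MaxDist y E ^ 2 := by nlinarith [dist_nonneg (x := y) (y := e)]
  have sq3 : MinDist x B ^ 2 ≤ dist x c ^ 2 := by nlinarith
  have sq4 : MinDist y B ^ 2 ≤ dist y c ^ 2 := by nlinarith
  rw [← hzdef] at key
  simp only [smul_eq_mul]
  rw [hMz, hmz, key]
  nlinarith [mul_le_mul_of_nonneg_left sq1 ha, mul_le_mul_of_nonneg_left sq2 hb,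
    mul_le_mul_of_nonneg_left sq3 ha, mul_le_mul_of_nonneg_left sq4 hb]
end

section
/- Let ě ≤ ê and b̌ ≤ b̂ be real numbers. Then the function h : ℝ → ℝ defined by h(p) = max((ě − p)², (ê − p)²) − m(p), where m(p) = (b̌ − p)² if p < b̌, m(p) = (b̂ − p)² if b̂ < p, and m(p) = 0 if b̌ ≤ p ≤ b̂, is convex on ℝ. -/
/-!
For `e ∈ {ě, ê}` and `c ∈ [b̌, b̂]` the function `p ↦ (e - p)² - (c - p)²` is affine in `p`.
Since `MinDist(p, B)² ≤ (c - p)²` with equality at the projection `c` of `p` onto `[b̌, b̂]`,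
`h` is the pointwise maximum of these affine functions, and the maximum is attained
at every point. A function with a supporting affine minorant at every point is convex.
-/

open Set

noncomputable def sqDistIcc (a b p : ℝ) : ℝ :=
  if p < a then (a - p) ^ 2 else if b < p then (b - p) ^ 2 else 0

theorem sqDistIcc_le_sq_sub {a b c : ℝ} (hc : c ∈ Icc a b) (p : ℝ) :
    sqDistIcc a b p ≤ (c - p) ^ 2 := by
  obtain ⟨hac, hcb⟩ := hc
  unfold sqDistIcc
  split_ifs with hpa hbp
  · nlinarith
  · nlinarith
  · positivity

theorem exists_mem_Icc_sqDistIcc_eq {a b : ℝ} (hab : a ≤ b) (p : ℝ) :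
    ∃ c ∈ Icc a b, sqDistIcc a b p = (c - p) ^ 2 := by
  unfold sqDistIcc
  split_ifs with hpa hbp
  · exact ⟨a, left_mem_Icc.2 hab, rfl⟩
  · exact ⟨b, right_mem_Icc.2 hab, rfl⟩
  · exact ⟨p, ⟨not_lt.1 hpa, not_lt.1 hbp⟩, by ring⟩

theorem convexOn_of_forall_supporting {E : Type*} [AddCommGroup E] [Module ℝ E]
    {s : Set E} {f : E → ℝ} (hs : Convex ℝ s)
    (hf : ∀ z ∈ s, ∃ φ : E →ₗ[ℝ] ℝ, ∀ x ∈ s, f z + φ (x - z) ≤ f x) :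
    ConvexOn ℝ s f := by
  refine ⟨hs, fun x hx y hy a b ha hb hab => ?_⟩
  obtain ⟨φ, hφ⟩ := hf _ (hs hx hy ha hb hab)
  set z := a • x + b • y
  have hφz : a * φ (x - z) + b * φ (y - z) = 0 := by
    rw [← smul_eq_mul, ← smul_eq_mul, ← map_smul, ← map_smul, ← map_add, smul_sub, smul_sub,
      sub_add_sub_comm, ← add_smul, hab, one_smul, sub_self, map_zero]
  calc f z = a * (f z + φ (x - z)) + b * (f z + φ (y - z)) := by
        linear_combination (-f z) * hab - hφz
    _ ≤ a * f x + b * f y := by gcongr <;> exact hφ _ ‹_›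
    _ = a • f x + b • f y := rfl

theorem h_convex_general (el eh bl bh : ℝ) (hB : bl ≤ bh) :
    ConvexOn ℝ Set.univ
      (fun p : ℝ =>
        max ((el - p) ^ 2) ((eh - p) ^ 2) -
          (if p < bl then (bl - p) ^ 2 else if bh < p then (bh - p) ^ 2 else 0)) := by
  change ConvexOn ℝ univ fun p => max ((el - p) ^ 2) ((eh - p) ^ 2) - sqDistIcc bl bh p
  refine convexOn_of_forall_supporting convex_univ fun z _ => ?_
  obtain ⟨c, hc, hcz⟩ := exists_mem_Icc_sqDistIcc_eq hB z
  obtain ⟨e, he, hez⟩ : ∃ e ∈ ({el, eh} : Set ℝ),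
      max ((el - z) ^ 2) ((eh - z) ^ 2) = (e - z) ^ 2 := by
    rcases max_choice ((el - z) ^ 2) ((eh - z) ^ 2) with h | h
    exacts [⟨el, .inl rfl, h⟩, ⟨eh, .inr rfl, h⟩]
  refine ⟨LinearMap.mulLeft ℝ (2 * (c - e)), fun x _ => ?_⟩
  have hex : (e - x) ^ 2 ≤ max ((el - x) ^ 2) ((eh - x) ^ 2) := by
    rcases he with rfl | rfl
    exacts [le_max_left _ _, le_max_right _ _]
  calc max ((el - z) ^ 2) ((eh - z) ^ 2) - sqDistIcc bl bh z + 2 * (c - e) * (x - z)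
      = (e - x) ^ 2 - (c - x) ^ 2 := by rw [hez, hcz]; ring
    _ ≤ max ((el - x) ^ 2) ((eh - x) ^ 2) - sqDistIcc bl bh x := by
        gcongr; exact sqDistIcc_le_sq_sub hc x

/-- The one-dimensional contribution `h` to the difference of squared max- and
min-distances to two intervals `[ě, ê]` and `[b̌, b̂]` is convex. -/
theorem h_convex (el eh bl bh : ℝ) (hE : el ≤ eh) (hB : bl ≤ bh) :
    ConvexOn ℝ Set.univ
      (fun p : ℝ =>
        max ((el - p) ^ 2) ((eh - p) ^ 2) -
          (if p < bl then (bl - p) ^ 2 else if bh < p then (bh - p) ^ 2 else 0)) :=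
  h_convex_general el eh bl bh hB
end

section
/- Let M be a nonempty axis-aligned bounding box in Euclidean space ℝ^r with componentwise bounds ℓ_d ≤ u_d, and let p ∈ ℝ^r. Then MaxDist(p, M)² = Σ_{d=1}^{r} max((ℓ_d − p_d)², (u_d − p_d)²). -/
/-- Squared maximum distance from a point to an AABB decomposes per dimension. -/
theorem maxDist_sq_eq {r : ℕ} (ℓ u : EuclideanSpace ℝ (Fin r)) (hM : ∀ d, ℓ d ≤ u d)
    (p : EuclideanSpace ℝ (Fin r)) :
    MaxDist p (AABB ℓ u) ^ 2 =
      ∑ d : Fin r, max ((ℓ d - p d) ^ 2) ((u d - p d) ^ 2) := by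
  set S : ℝ := ∑ d : Fin r, max ((ℓ d - p d) ^ 2) ((u d - p d) ^ 2) with hS
  have hS0 : 0 ≤ S := Finset.sum_nonneg fun d _ => le_max_of_le_left (sq_nonneg _)
  -- corner achieving the max
  set c : EuclideanSpace ℝ (Fin r) :=
    WithLp.toLp 2 (fun d => if (u d - p d) ^ 2 ≤ (ℓ d - p d) ^ 2 then ℓ d else u d) with hc
  have hcmem : c ∈ AABB ℓ u := by
    intro d
    simp only [hc, WithLp.ofLp_toLp]
    split <;> constructor <;> first | exact le_refl _ | exact hM d
  have hdist : ∀ x : EuclideanSpace ℝ (Fin r), dist p x = Real.sqrt (∑ d, (x d - p d) ^ 2) := by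
    intro x
    rw [dist_comm, EuclideanSpace.dist_eq]
    congr 1
    refine Finset.sum_congr rfl fun d _ => ?_
    rw [Real.dist_eq, sq_abs]
  have hcd : dist p c = Real.sqrt S := by
    rw [hdist]
    congr 1
    refine Finset.sum_congr rfl fun d _ => ?_
    simp only [hc, WithLp.ofLp_toLp]
    split
    · rw [max_eq_left ‹_›]
    · rw [max_eq_right (le_of_not_ge ‹_›)]
  have hub : ∀ x ∈ AABB ℓ u, dist p x ≤ Real.sqrt S := by
    intro x hx
    rw [hdist]
    apply Real.sqrt_le_sqrt
    refine Finset.sum_le_sum fun d _ => ?_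
    have h1 := (hx d).1
    have h2 := (hx d).2
    rcases le_total (p d) (x d) with h | h
    · refine le_max_of_le_right ?_
      have : 0 ≤ x d - p d := by linarith
      nlinarith
    · refine le_max_of_le_left ?_
      have : x d - p d ≤ 0 := by linarith
      nlinarith
  have hsup : MaxDist p (AABB ℓ u) = Real.sqrt S := by
    unfold MaxDist
    apply IsGreatest.csSup_eq
    constructor
    · exact ⟨c, hcmem, hcd⟩
    · rintro y ⟨x, hx, rfl⟩
      exact hub x hx
  rw [hsup, Real.sq_sqrt hS0]
end

section
/- Let O, E, B be nonempty axis-aligned bounding boxes in Euclidean space ℝ^r, with componentwise bounds Ǒ_d ≤ Ô_d, Ě_d ≤ Ê_d, B̌_d ≤ B̂_d. Define, for each dimension d and real x: dminB_d(x) = (B̌_d − x)² if x < B̌_d, (B̂_d − x)² if B̂_d < x, and 0 otherwise; and dmaxE_d(x) = max((Ê_d − x)², (Ě_d − x)²). Then 0 < Σ_{d=1}^{r} min(dminB_d(Ǒ_d) − dmaxE_d(Ǒ_d), dminB_d(Ô_d) − dmaxE_d(Ô_d)) if and only if for every o ∈ O, every e ∈ E, and every b ∈ B, dist(o, e) < dist(o,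 b). (Correctness of the optimized O(r) AllPointsCloser algorithm.) -/
/-- Per-dimension squared minimum distance to the interval `[bl, bh]`. -/
noncomputable def dminB (bl bh x : ℝ) : ℝ :=
  if x < bl then (bl - x) ^ 2 else if bh < x then (bh - x) ^ 2 else 0

/-- Per-dimension squared maximum distance to the interval `[el, eh]`. -/
def dmaxE (el eh x : ℝ) : ℝ :=
  max ((eh - x) ^ 2) ((el - x) ^ 2)

lemma dminB_le (bl bh x b : ℝ) (h1 : bl ≤ b) (h2 : b ≤ bh) :
    dminB bl bh x ≤ (x - b) ^ 2 := by
  unfold dminB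
  split_ifs with h3 h4 <;> nlinarith [sq_nonneg (x - b)]

lemma le_dmaxE (el eh x e : ℝ) (h1 : el ≤ e) (h2 : e ≤ eh) :
    (x - e) ^ 2 ≤ dmaxE el eh x := by
  unfold dmaxE
  rcases le_total e x with h | h
  · exact le_max_of_le_right (by nlinarith)
  · exact le_max_of_le_left (by nlinarith)

lemma dminB_exists (bl bh x : ℝ) (h : bl ≤ bh) :
    ∃ y, bl ≤ y ∧ y ≤ bh ∧ dminB bl bh x = (x - y) ^ 2 := by
  unfold dminB
  split_ifs with h1 h2
  · exact ⟨bl, le_refl _, h, by ring⟩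
  · exact ⟨bh, h, le_refl _, by ring⟩
  · exact ⟨x, le_of_not_gt h1, le_of_not_gt h2, by ring⟩

lemma dmaxE_exists (el eh x : ℝ) :
    ∃ z, (z = el ∨ z = eh) ∧ dmaxE el eh x = (x - z) ^ 2 := by
  unfold dmaxE
  rcases max_cases ((eh - x) ^ 2) ((el - x) ^ 2) with ⟨h, _⟩ | ⟨h, _⟩
  · exact ⟨eh, Or.inr rfl, by rw [h]; ring⟩
  · exact ⟨el, Or.inl rfl, by rw [h]; ring⟩

/-- Concavity: the minimum of `dminB - dmaxE` over an interval is attained at an endpoint. -/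
lemma min_endpoints_le (bl bh el eh ℓ u x : ℝ) (hb : bl ≤ bh)
    (hx1 : ℓ ≤ x) (hx2 : x ≤ u) :
    min (dminB bl bh ℓ - dmaxE el eh ℓ) (dminB bl bh u - dmaxE el eh u) ≤
      dminB bl bh x - dmaxE el eh x := by
  obtain ⟨y, hy1, hy2, hyx⟩ := dminB_exists bl bh x hb
  obtain ⟨z, hz, hzx⟩ := dmaxE_exists el eh x
  have hℓ : dminB bl bh ℓ ≤ (ℓ - y) ^ 2 := dminB_le bl bh ℓ y hy1 hy2
  have hu : dminB bl bh u ≤ (u - y) ^ 2 := dminB_le bl bh u y hy1 hy2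
  have hzℓ : (ℓ - z) ^ 2 ≤ dmaxE el eh ℓ := by
    unfold dmaxE
    rcases hz with rfl | rfl
    · exact le_max_of_le_right (by nlinarith)
    · exact le_max_of_le_left (by nlinarith)
  have hzu : (u - z) ^ 2 ≤ dmaxE el eh u := by
    unfold dmaxE
    rcases hz with rfl | rfl
    · exact le_max_of_le_right (by nlinarith)
    · exact le_max_of_le_left (by nlinarith)
  rcases le_total y z with hyz | hyz
  · calc min (dminB bl bh ℓ - dmaxE el eh ℓ) (dminB bl bh u - dmaxE el eh u)
        ≤ dminB bl bh ℓ - dmaxE el eh ℓ := min_le_left _ _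
      _ ≤ dminB bl bh x - dmaxE el eh x := by
          rw [hyx, hzx]
          nlinarith [mul_nonneg (sub_nonneg.2 hx1) (sub_nonneg.2 hyz)]
  · calc min (dminB bl bh ℓ - dmaxE el eh ℓ) (dminB bl bh u - dmaxE el eh u)
        ≤ dminB bl bh u - dmaxE el eh u := min_le_right _ _
      _ ≤ dminB bl bh x - dmaxE el eh x := by
          rw [hyx, hzx]
          nlinarith [mul_nonneg (sub_nonneg.2 hx2) (sub_nonneg.2 hyz)]

lemma dist_sq_eq {r : ℕ} (p q : EuclideanSpace ℝ (Fin r)) :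
    dist p q ^ 2 = ∑ d, (p d - q d) ^ 2 := by
  simp only [EuclideanSpace.dist_eq, Real.dist_eq, sq_abs]
  exact Real.sq_sqrt (Finset.sum_nonneg fun _ _ => sq_nonneg _)

/-- Correctness of the optimized `O(r)` AllPointsCloser algorithm. -/
theorem allPointsCloser_optimized {r : ℕ}
    (ℓO uO ℓE uE ℓB uB : EuclideanSpace ℝ (Fin r))
    (hO : ∀ d, ℓO d ≤ uO d) (hE : ∀ d, ℓE d ≤ uE d) (hB : ∀ d, ℓB d ≤ uB d) :
    (0 < ∑ d : Fin r,
        min (dminB (ℓB d) (uB d) (ℓO d) - dmaxE (ℓE d) (uE d) (ℓO d))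
            (dminB (ℓB d) (uB d) (uO d) - dmaxE (ℓE d) (uE d) (uO d))) ↔
      (∀ o ∈ AABB ℓO uO, ∀ e ∈ AABB ℓE uE, ∀ b ∈ AABB ℓB uB, dist o e < dist o b) := by
  constructor
  · intro hsum o ho e he b hb
    have h1 : dist o e ^ 2 ≤ ∑ d, dmaxE (ℓE d) (uE d) (o d) := by
      rw [dist_sq_eq]
      exact Finset.sum_le_sum fun d _ => le_dmaxE _ _ _ _ (he d).1 (he d).2
    have h2 : (∑ d, dminB (ℓB d) (uB d) (o d)) ≤ dist o b ^ 2 := by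
      rw [dist_sq_eq]
      exact Finset.sum_le_sum fun d _ => dminB_le _ _ _ _ (hb d).1 (hb d).2
    have h3 : (∑ d : Fin r,
        min (dminB (ℓB d) (uB d) (ℓO d) - dmaxE (ℓE d) (uE d) (ℓO d))
            (dminB (ℓB d) (uB d) (uO d) - dmaxE (ℓE d) (uE d) (uO d))) ≤
        ∑ d : Fin r, (dminB (ℓB d) (uB d) (o d) - dmaxE (ℓE d) (uE d) (o d)) :=
      Finset.sum_le_sum fun d _ =>
        min_endpoints_le _ _ _ _ _ _ _ (hB d) (ho d).1 (ho d).2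
    have h4 : dist o e ^ 2 < dist o b ^ 2 := by
      have := Finset.sum_sub_distrib (s := (Finset.univ : Finset (Fin r)))
        (f := fun d => dminB (ℓB d) (uB d) (o d))
        (g := fun d => dmaxE (ℓE d) (uE d) (o d))
      linarith [h3.trans_eq this]
    exact lt_of_pow_lt_pow_left₀ 2 dist_nonneg h4
  · intro h
    set o : EuclideanSpace ℝ (Fin r) := WithLp.toLp 2 fun d =>
      if dminB (ℓB d) (uB d) (ℓO d) - dmaxE (ℓE d) (uE d) (ℓO d) ≤
          dminB (ℓB d) (uB d) (uO d) - dmaxE (ℓE d) (uE d) (uO d)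
        then ℓO d else uO d with ho_def
    have ho : o ∈ AABB ℓO uO := by
      intro d
      simp only [ho_def, PiLp.toLp_apply]
      split_ifs <;> exact ⟨by simp [hO d], by simp [hO d]⟩
    set b : EuclideanSpace ℝ (Fin r) := WithLp.toLp 2 fun d => max (ℓB d) (min (uB d) (o d)) with hb_def
    have hbmem : b ∈ AABB ℓB uB := by
      intro d
      refine ⟨le_max_left _ _, max_le (hB d) (min_le_left _ _)⟩
    set e : EuclideanSpace ℝ (Fin r) := WithLp.toLp 2 fun d =>
      if (ℓE d - o d) ^ 2 ≤ (uE d - o d) ^ 2 then uE d else ℓE d with he_def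
    have hemem : e ∈ AABB ℓE uE := by
      intro d
      simp only [he_def, PiLp.toLp_apply]
      split_ifs <;> exact ⟨by simp [hE d], by simp [hE d]⟩
    have hbe : ∀ d, dminB (ℓB d) (uB d) (o d) = (o d - b d) ^ 2 := by
      intro d
      simp only [hb_def, PiLp.toLp_apply]
      unfold dminB
      split_ifs with h1 h2
      · rw [min_eq_right (le_of_lt (h1.trans_le (hB d))), max_eq_left (le_of_lt h1)]
        ring
      · have h3 : ℓB d ≤ o d := le_of_not_gt h1
        have : min (uB d) (o d) = uB d := min_eq_left (le_of_lt h2)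
        rw [this, max_eq_right (hB d)]
        ring
      · have h3 : ℓB d ≤ o d := le_of_not_gt h1
        have h4 : o d ≤ uB d := le_of_not_gt h2
        rw [min_eq_right h4, max_eq_right h3]
        ring
    have hee : ∀ d, dmaxE (ℓE d) (uE d) (o d) = (o d - e d) ^ 2 := by
      intro d
      simp only [he_def, PiLp.toLp_apply]
      unfold dmaxE
      split_ifs with h1
      · rw [max_eq_left (by nlinarith)]; ring
      · rw [max_eq_right (le_of_not_ge h1)]; ring
    have hlt := h o ho e hemem b hbmem
    have hsq : dist o e ^ 2 < dist o b ^ 2 :=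
      pow_lt_pow_left₀ hlt dist_nonneg (by norm_num)
    rw [dist_sq_eq, dist_sq_eq] at hsq
    have hmin : ∀ d : Fin r,
        min (dminB (ℓB d) (uB d) (ℓO d) - dmaxE (ℓE d) (uE d) (ℓO d))
            (dminB (ℓB d) (uB d) (uO d) - dmaxE (ℓE d) (uE d) (uO d)) =
          dminB (ℓB d) (uB d) (o d) - dmaxE (ℓE d) (uE d) (o d) := by
      intro d
      simp only [ho_def, PiLp.toLp_apply]
      split_ifs with h1
      · exact min_eq_left h1
      · exact min_eq_right (le_of_not_ge h1)
    calc (0:ℝ) < ∑ d : Fin r, ((o d - b d) ^ 2 - (o d - e d) ^ 2) := by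
          rw [Finset.sum_sub_distrib]; linarith
      _ = ∑ d : Fin r,
          min (dminB (ℓB d) (uB d) (ℓO d) - dmaxE (ℓE d) (uE d) (ℓO d))
              (dminB (ℓB d) (uB d) (uO d) - dmaxE (ℓE d) (uE d) (uO d)) := by
          refine Finset.sum_congr rfl fun d _ => ?_
          rw [hmin d, hbe d, hee d]
end
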